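/- Let k > 1 and let s be the Yu-Gong sequence of period N = 4(2^{2k} − 1). Then S(2)·T* ≡ −2^{2k+1} (mod 2^{2^k+1} − 1). -/

import Mathlib

/-!
Put `M = 2^k + 1`, so that `W = (2^k - 1) M`. Modulo `2^M - 1` the powers of `2` have period `M`,
so `S(2)` and `T*` become `∑_{u < M} x^u c_u` with `x = 2`, resp. `x = 2⁻¹ = 2^(2^k)`, where `c_u`
gathers the indices `≡ u (mod M)`; and `∑_{u < M} x^u = 0`. Each column `(s_{iW+j})_{i<4}` is a
cyclic shift of `(0,1,1,1)` plus `b_j`, so `c_u` is an affine function of the number of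
`j ≡ u (mod M)` with `b_j = 1`. As `β = α^M` generates `𝔽_{2^k}ˣ`, that number is
`#{y ∈ 𝔽_{2^k} | Tr(α^u y) = 1}`: it is `0` for `u = 0`, since the trace vanishes on `𝔽_{2^k}`,
and `0` or `2^(k-1)` otherwise, as for any linear functional on `𝔽_{2^k}`. Since `b` has
`2^(2k-1)` ones in total, it is `2^(k-1)` for every `u ≠ 0`. Hence `S(2) ≡ 2^k`, `T* ≡ -2^(k+1)`.
-/

open Finset

theorem Finset.sum_range_mul {M : Type*} [AddCommMonoid M] (f : ℕ → M) (a b : ℕ) :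
    ∑ t ∈ range (a * b), f t = ∑ i ∈ range a, ∑ j ∈ range b, f (i * b + j) := by
  induction a with
  | zero => simp
  | succ a ih => rw [Nat.succ_mul, sum_range_add, ih, sum_range_succ]

theorem ZMod.sum_val_eq_card_filter_eq_one {ι : Type*} (s : Finset ι) (g : ι → ZMod 2) :
    ∑ x ∈ s, (g x).val = #{x ∈ s | g x = 1} := by
  rw [card_filter]
  refine sum_congr rfl fun x _ => ?_
  generalize g x = c
  fin_cases c <;> rfl

theorem AddSubgroup.two_mul_card_filter_eq_one {G : Type*} [AddGroup G] [Fintype G]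
    (H : AddSubgroup G) [DecidablePred (· ∈ H)] (f : G →+ ZMod 2) {y : G} (hyH : y ∈ H)
    (hy : f y = 1) : 2 * #{x | x ∈ H ∧ f x = 1} = #{x | x ∈ H} := by
  have translate : #{x | x ∈ H ∧ f x = 0} = #{x | x ∈ H ∧ f x = 1} := by
    refine card_nbij' (· + y) (· - y) (fun x hx => ?_) (fun x hx => ?_)
      (fun x _ => add_sub_cancel_right x y) (fun x _ => sub_add_cancel x y)
    · simp only [coe_filter, mem_univ, true_and, Set.mem_ofPred_eq] at hx ⊢
      exact ⟨H.add_mem hx.1 hyH, by rw [map_add, hx.2, hy, zero_add]⟩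
    · simp only [coe_filter, mem_univ, true_and, Set.mem_ofPred_eq] at hx ⊢
      exact ⟨H.sub_mem hx.1 hyH, by rw [map_sub, hx.2, hy, sub_self]⟩
  have split : #{x | x ∈ H ∧ f x = 1} + #{x | x ∈ H ∧ f x = 0} = #{x | x ∈ H} := by
    rw [← card_filter_add_card_filter_not (s := {x | x ∈ H}) (p := (f · = 1)), filter_filter,
      filter_filter]
    congr 2
    refine filter_congr fun x _ => and_congr_right fun _ => ?_
    generalize f x = c
    revert c
    decide
  omega

theorem pow_eq_self_iff_pow_pred_eq_one {M₀ : Type*} [MonoidWithZero M₀]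
    [IsRightCancelMulZero M₀] {x : M₀} {n : ℕ} (hn : 0 < n) (hx : x ≠ 0) :
    x ^ n = x ↔ x ^ (n - 1) = 1 := by
  conv_lhs => rw [← Nat.sub_add_cancel hn, pow_succ]
  exact mul_eq_right₀ hx

theorem IsPrimitiveRoot.sum_range_pow_eq_sum_nthRootsFinset {R M : Type*} [CommRing R]
    [IsDomain R] [AddCommMonoid M] {ζ : R} {n : ℕ} (h : IsPrimitiveRoot ζ n) (f : R → M) :
    ∑ l ∈ range n, f (ζ ^ l) = ∑ x ∈ Polynomial.nthRootsFinset n (1 : R), f x := by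
  rcases Nat.eq_zero_or_pos n with rfl | hn
  · simp
  have : NeZero n := ⟨hn.ne'⟩
  refine sum_nbij (ζ ^ ·) (fun l _ => ?_) (fun i hi j hj hij => ?_) (fun x hx => ?_)
    (fun _ _ => rfl)
  · rw [Polynomial.mem_nthRootsFinset hn, ← pow_mul, mul_comm, pow_mul, h.pow_eq_one, one_pow]
  · exact h.pow_inj (mem_range.mp hi) (mem_range.mp hj) hij
  · obtain ⟨l, hl, rfl⟩ := h.eq_pow_of_pow_eq_one ((Polynomial.mem_nthRootsFinset hn 1).mp hx)
    exact ⟨l, mem_range.mpr hl, rfl⟩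

theorem geom_sum_eq_zero_of_pow_eq_one {R : Type*} [CommRing R] {x : R} {n : ℕ}
    (hx : x ^ n = 1) (hunit : IsUnit (x - 1)) : ∑ i ∈ range n, x ^ i = 0 :=
  hunit.mul_left_eq_zero.mp (by rw [geom_sum_mul, hx, sub_self])

theorem sum_range_pow_mul_add_ite {R : Type*} [CommRing R] {x : R} {n : ℕ} (hn : 0 < n)
    (hx : ∑ i ∈ range n, x ^ i = 0) (a b : R) :
    ∑ i ∈ range n, x ^ i * (a + if i = 0 then b else 0) = b := by
  simp only [mul_add, sum_add_distrib, ← sum_mul, hx, zero_mul, zero_add, mul_ite, mul_zero,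
    sum_ite_eq', mem_range, hn, if_true, pow_zero, one_mul]

theorem pow_sub_mod_eq_pow {R : Type*} [CommMonoid R] {x y : R} {N t : ℕ} (hxy : y * x = 1)
    (hN : x ^ N = 1) (ht : t ≤ N) : x ^ ((N - t) % N) = y ^ t := by
  rw [← pow_eq_pow_mod _ hN]
  calc x ^ (N - t) = (y * x) ^ t * x ^ (N - t) := by rw [hxy, one_pow, one_mul]
    _ = y ^ t * x ^ N := by rw [mul_pow, mul_assoc, ← pow_add, Nat.add_sub_cancel' ht]
    _ = y ^ t := by rw [hN, mul_one]

theorem sum_range_mul_pow_eq_of_sum_fiber {R : Type*} [CommRing R] {x : R} {M : ℕ} (hM : 0 < M)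
    (hx : x ^ M = 1) (hgeom : ∑ u ∈ range M, x ^ u = 0) (n w : ℕ) (f : ℕ → R) (a b : R)
    (hf : ∀ u < M, ∑ l ∈ range w, ∑ i ∈ range n, f (i * (w * M) + (l * M + u)) =
      a + if u = 0 then b else 0) :
    ∑ t ∈ range (n * (w * M)), f t * x ^ t = b := by
  have periodic : ∀ i l u, x ^ (i * (w * M) + (l * M + u)) = x ^ u := fun i l u => by
    rw [show i * (w * M) = M * (i * w) by ring, mul_comm l]
    simp only [pow_add, pow_mul, hx, one_pow, one_mul]
  calc ∑ t ∈ range (n * (w * M)), f t * x ^ t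
      = ∑ u ∈ range M, x ^ u * ∑ l ∈ range w, ∑ i ∈ range n, f (i * (w * M) + (l * M + u)) := by
        simp only [sum_range_mul, periodic, mul_sum, mul_comm (f _)]
        rw [sum_comm]
        simp only [sum_comm (s := range n)]
        rw [sum_comm]
    _ = ∑ u ∈ range M, x ^ u * (a + if u = 0 then b else 0) :=
        sum_congr rfl fun u hu => by rw [hf u (mem_range.mp hu)]
    _ = b := sum_range_pow_mul_add_ite hM hgeom a b

theorem two_pow_two_mul_sub_one (k : ℕ) : 2 ^ (2 * k) - 1 = (2 ^ k - 1) * (2 ^ k + 1) := by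
  rw [two_mul, pow_add, mul_self_tsub_one, mul_comm]

theorem ZMod.two_pow_eq_one (M : ℕ) : (2 : ZMod (2 ^ M - 1)) ^ M = 1 := by
  have := ZMod.natCast_self (2 ^ M - 1)
  push_cast [Nat.one_le_two_pow] at this
  exact sub_eq_zero.mp this

section PowTwoPowFixed

variable {F : Type*} [Field F] [Fintype F] [DecidableEq F] {k : ℕ}

theorem filter_pow_two_pow_eq_self (hk : 0 < k) :
    ({x | x ^ 2 ^ k = x} : Finset F) = insert 0 (Polynomial.nthRootsFinset (2 ^ k - 1) 1) := by
  have hw : 0 < 2 ^ k - 1 := Nat.sub_pos_of_lt (Nat.one_lt_two_pow hk.ne')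
  ext x
  by_cases hx : x = 0
  · simp [hx]
  · simp [hx, pow_eq_self_iff_pow_pred_eq_one (Nat.two_pow_pos k) hx,
      Polynomial.mem_nthRootsFinset hw]

theorem card_filter_pow_two_pow_eq_self (hk : 0 < k) {β : F}
    (hβ : IsPrimitiveRoot β (2 ^ k - 1)) : #{x : F | x ^ 2 ^ k = x} = 2 ^ k := by
  have hw : 0 < 2 ^ k - 1 := Nat.sub_pos_of_lt (Nat.one_lt_two_pow hk.ne')
  rw [filter_pow_two_pow_eq_self hk,
    card_insert_of_notMem (by simp [Polynomial.mem_nthRootsFinset hw, zero_pow hw.ne']),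
    hβ.card_nthRootsFinset, Nat.sub_add_cancel Nat.one_le_two_pow]

end PowTwoPowFixed

section Trace

variable {F : Type*} [Field F] [Fintype F] [Algebra (ZMod 2) F]

theorem two_mul_card_filter_trace_eq_one :
    2 * #{x : F | Algebra.trace (ZMod 2) F x = 1} = Fintype.card F := by
  classical
  obtain ⟨y, hy⟩ : ∃ y : F, Algebra.trace (ZMod 2) F y = 1 := by
    by_contra! h
    have ne_one : ∀ c : ZMod 2, c ≠ 1 → c = 0 := by decide
    exact Algebra.trace_ne_zero (ZMod 2) F (LinearMap.ext fun y => ne_one _ (h y))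
  simpa using (⊤ : AddSubgroup F).two_mul_card_filter_eq_one
    (Algebra.trace (ZMod 2) F).toAddMonoidHom (AddSubgroup.mem_top y) hy

theorem two_mul_sum_range_val_trace_pow {α : F} (hα : orderOf α = Fintype.card F - 1) :
    2 * ∑ j ∈ range (Fintype.card F - 1), (Algebra.trace (ZMod 2) F (α ^ j)).val =
      Fintype.card F := by
  classical
  have hq : 0 < Fintype.card F - 1 := Nat.sub_pos_of_lt Fintype.one_lt_card
  have roots : Polynomial.nthRootsFinset (Fintype.card F - 1) (1 : F) = univ.erase 0 := by
    ext x
    by_cases hx : x = 0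
    · simp [hx, Polynomial.mem_nthRootsFinset hq, zero_pow hq.ne']
    · simp [hx, Polynomial.mem_nthRootsFinset hq, FiniteField.pow_card_sub_one_eq_one x hx]
  have hprim : IsPrimitiveRoot α (Fintype.card F - 1) := hα ▸ IsPrimitiveRoot.orderOf α
  rw [hprim.sum_range_pow_eq_sum_nthRootsFinset (fun x => (Algebra.trace (ZMod 2) F x).val),
    roots, sum_erase _ (by simp), ZMod.sum_val_eq_card_filter_eq_one,
    two_mul_card_filter_trace_eq_one]

theorem trace_eq_zero_of_pow_two_pow_eq_self {k : ℕ} (hF : Module.finrank (ZMod 2) F = 2 * k)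
    {x : F} (hx : x ^ 2 ^ k = x) : Algebra.trace (ZMod 2) F x = 0 := by
  have : CharP F 2 := charP_of_injective_algebraMap (algebraMap (ZMod 2) F).injective 2
  have periodic : ∀ i, x ^ 2 ^ (k + i) = x ^ 2 ^ i := fun i => by rw [pow_add, pow_mul, hx]
  apply (algebraMap (ZMod 2) F).injective
  rw [FiniteField.algebraMap_trace_eq_sum_pow, hF, two_mul, sum_range_add, map_zero]
  simp only [Nat.card_zmod, periodic, CharTwo.add_self_eq_zero]

variable [DecidableEq F] {k : ℕ}

theorem sum_val_trace_mul_pow_eq_card (hk : 0 < k) {β : F} (hβ : IsPrimitiveRoot β (2 ^ k - 1))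
    (a : F) :
    ∑ l ∈ range (2 ^ k - 1), (Algebra.trace (ZMod 2) F (a * β ^ l)).val =
      #{x : F | x ^ 2 ^ k = x ∧ Algebra.trace (ZMod 2) F (a * x) = 1} := by
  rw [hβ.sum_range_pow_eq_sum_nthRootsFinset (fun x => (Algebra.trace (ZMod 2) F (a * x)).val),
    ZMod.sum_val_eq_card_filter_eq_one, ← filter_filter, filter_pow_two_pow_eq_self hk,
    filter_insert]
  simp

theorem card_filter_pow_two_pow_eq_self_trace_eq_one (a : F) :
    #{x : F | x ^ 2 ^ k = x ∧ Algebra.trace (ZMod 2) F (a * x) = 1} = 0 ∨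
      2 * #{x : F | x ^ 2 ^ k = x ∧ Algebra.trace (ZMod 2) F (a * x) = 1} =
        #{x : F | x ^ 2 ^ k = x} := by
  classical
  have : CharP F 2 := charP_of_injective_algebraMap (algebraMap (ZMod 2) F).injective 2
  let K := ((iterateFrobenius F 2 k).eqLocusField (RingHom.id F)).toAddSubgroup
  have hK : ∀ x, x ∈ K ↔ x ^ 2 ^ k = x := fun x => by simp [K, iterateFrobenius_def]
  let f := (Algebra.trace (ZMod 2) F).toAddMonoidHom.comp (AddMonoidHom.mulLeft a)
  have hKf : ({x | x ^ 2 ^ k = x ∧ Algebra.trace (ZMod 2) F (a * x) = 1} : Finset F) =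
      ({x | x ∈ K ∧ f x = 1} : Finset F) := by
    ext x; simp [hK, f]
  have hKc : ({x | x ^ 2 ^ k = x} : Finset F) = ({x | x ∈ K} : Finset F) := by
    ext x; simp [hK]
  rw [hKf, hKc]
  by_cases h : ∃ y ∈ K, f y = 1
  · obtain ⟨y, hyK, hy⟩ := h
    exact Or.inr (K.two_mul_card_filter_eq_one f hyK hy)
  · push Not at h
    exact Or.inl (card_eq_zero.mpr (filter_eq_empty_iff.mpr fun x _ hx => h x hx.1 hx.2))

end Trace

theorem sum_range_val_trace_pow_mul_add {F : Type*} [Field F] [Fintype F] [Algebra (ZMod 2) F]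
    {k : ℕ} (hk : 0 < k) (hF : Fintype.card F = 2 ^ (2 * k)) {α : F}
    (hα : orderOf α = 2 ^ (2 * k) - 1) {u : ℕ} (hu : u < 2 ^ k + 1) :
    ∑ l ∈ range (2 ^ k - 1), (Algebra.trace (ZMod 2) F (α ^ (l * (2 ^ k + 1) + u))).val =
      if u = 0 then 0 else 2 ^ (k - 1) := by
  classical
  set c : ℕ → ℕ := fun u =>
    ∑ l ∈ range (2 ^ k - 1), (Algebra.trace (ZMod 2) F (α ^ (l * (2 ^ k + 1) + u))).val
  have hfinrank : Module.finrank (ZMod 2) F = 2 * k := by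
    rw [Module.card_eq_pow_finrank (K := ZMod 2), ZMod.card] at hF
    exact Nat.pow_right_injective le_rfl hF
  have hpow : 2 ^ k = 2 * 2 ^ (k - 1) := by rw [← pow_succ', Nat.sub_add_cancel hk]
  have hβ : IsPrimitiveRoot (α ^ (2 ^ k + 1)) (2 ^ k - 1) :=
    (hα ▸ IsPrimitiveRoot.orderOf α).pow (Nat.sub_pos_of_lt (Nat.one_lt_two_pow (by omega)))
      ((two_pow_two_mul_sub_one k).trans (mul_comm _ _))
  have hc : ∀ u, c u = #{x : F | x ^ 2 ^ k = x ∧ Algebra.trace (ZMod 2) F (α ^ u * x) = 1} := by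
    intro u
    rw [← sum_val_trace_mul_pow_eq_card hk hβ]
    refine sum_congr rfl fun l _ => ?_
    rw [pow_add, pow_mul', mul_comm]
  have hc_zero : c 0 = 0 := by
    rw [hc, card_eq_zero, filter_eq_empty_iff]
    rintro x - ⟨hx, h⟩
    rw [pow_zero, one_mul, trace_eq_zero_of_pow_two_pow_eq_self hfinrank hx] at h
    exact zero_ne_one h
  have hc_le : ∀ u ∈ range (2 ^ k + 1), c u ≤ if u = 0 then 0 else 2 ^ (k - 1) := by
    intro u _
    split_ifs with hu0
    · rw [hu0, hc_zero]
    · have := card_filter_pow_two_pow_eq_self_trace_eq_one (k := k) (α ^ u)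
      rw [← hc, card_filter_pow_two_pow_eq_self hk hβ] at this
      omega
  have hc_sum : 2 * ∑ u ∈ range (2 ^ k + 1), c u = 2 ^ (2 * k) := by
    have := two_mul_sum_range_val_trace_pow (hF ▸ hα)
    rwa [hF, two_pow_two_mul_sub_one k, sum_range_mul, ← sum_comm] at this
  refine (sum_eq_sum_iff_of_le hc_le).mp (Nat.eq_of_mul_eq_mul_left two_pos ?_) u
    (mem_range.mpr hu)
  rw [hc_sum, sum_range_succ']
  simp only [Nat.add_one_ne_zero, if_false, if_true, sum_const, card_range, smul_eq_mul, add_zero]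
  rw [two_mul k, pow_add, hpow]
  ring

theorem sum_range_four_shift {M : Type*} [AddCommMonoid M] (E : ℤ) (c : ZMod 2) (g : ZMod 2 → M) :
    ∑ i ∈ range 4, g ((if ((i : ℤ) + E) % 4 = 0 then 0 else 1) + c) = g c + 3 • g (1 + c) := by
  have : E % 4 = 0 ∨ E % 4 = 1 ∨ E % 4 = 2 ∨ E % 4 = 3 := by omega
  rcases this with h | h | h | h <;>
    simp [sum_range_succ, Int.add_emod _ E, h, succ_nsmul] <;> abel

theorem ZMod.apply_add_three_mul_apply_one_add {R : Type*} [CommRing R] (g : ZMod 2 → R)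
    (c : ZMod 2) :
    g c + 3 * g (1 + c) = (g 0 + 3 * g 1) + 2 * c.val * (g 0 - g 1) := by
  rcases (by decide : ∀ c : ZMod 2, c = 0 ∨ c = 1) c with rfl | rfl
  · simp
  · rw [show (1 + 1 : ZMod 2) = 0 from rfl, ZMod.val_one]
    ring

section YuGong

variable {k W : ℕ} {b : ℕ → ZMod 2} {e : ℕ → ℤ} {s : ℕ → ZMod 2} {R : Type*} [CommRing R]

theorem sum_range_yuGong_mul_pow (hk : 0 < k) (hW : W = (2 ^ k - 1) * (2 ^ k + 1))
    (hcount : ∀ u < 2 ^ k + 1, ∑ l ∈ range (2 ^ k - 1), (b (l * (2 ^ k + 1) + u)).val =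
      if u = 0 then 0 else 2 ^ (k - 1))
    (hs : ∀ i j : ℕ, i ≤ 3 → j ≤ W - 1 →
      s (i * W + j) = (if ((i : ℤ) + e j) % 4 = 0 then 0 else 1) + b j)
    (g : ZMod 2 → R) {x : R} (hx : x ^ (2 ^ k + 1) = 1)
    (hgeom : ∑ u ∈ range (2 ^ k + 1), x ^ u = 0) :
    ∑ t ∈ range (4 * W), g (s t) * x ^ t = 2 ^ k * (g 1 - g 0) := by
  subst hW
  refine sum_range_mul_pow_eq_of_sum_fiber (by positivity) hx hgeom 4 (2 ^ k - 1) (g ∘ s)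
    ((2 ^ k - 1 : ℕ) * (g 0 + 3 * g 1) + 2 ^ k * (g 0 - g 1)) _ fun u hu => ?_
  have column : ∀ l ∈ range (2 ^ k - 1),
      ∑ i ∈ range 4, (g ∘ s) (i * ((2 ^ k - 1) * (2 ^ k + 1)) + (l * (2 ^ k + 1) + u)) =
        (g 0 + 3 * g 1) + 2 * ((b (l * (2 ^ k + 1) + u)).val : R) * (g 0 - g 1) := by
    intro l hl
    have hj : l * (2 ^ k + 1) + u ≤ (2 ^ k - 1) * (2 ^ k + 1) - 1 := by
      have : (l + 1) * (2 ^ k + 1) ≤ (2 ^ k - 1) * (2 ^ k + 1) :=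
        Nat.mul_le_mul_right _ (mem_range.mp hl)
      rw [add_one_mul] at this
      omega
    rw [sum_congr rfl fun i hi => by
        rw [Function.comp_apply, hs i _ (by simpa [Nat.lt_succ_iff] using hi) hj],
      sum_range_four_shift, nsmul_eq_mul, Nat.cast_ofNat, ZMod.apply_add_three_mul_apply_one_add]
  have hpow : (2 : R) ^ k = 2 * 2 ^ (k - 1) := by rw [← pow_succ', Nat.sub_add_cancel hk]
  rw [sum_congr rfl column, sum_add_distrib, sum_const, card_range, nsmul_eq_mul, ← sum_mul,
    ← mul_sum, ← Nat.cast_sum, hcount u hu, hpow]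
  split_ifs <;> push_cast <;> ring

theorem sum_range_yuGong_mul_sum_range_reflected (hk : 0 < k)
    (hW : W = (2 ^ k - 1) * (2 ^ k + 1))
    (hcount : ∀ u < 2 ^ k + 1, ∑ l ∈ range (2 ^ k - 1), (b (l * (2 ^ k + 1) + u)).val =
      if u = 0 then 0 else 2 ^ (k - 1))
    (hs : ∀ i j : ℕ, i ≤ 3 → j ≤ W - 1 →
      s (i * W + j) = (if ((i : ℤ) + e j) % 4 = 0 then 0 else 1) + b j)
    (h2 : (2 : R) ^ (2 ^ k + 1) = 1) :
    (∑ t ∈ range (4 * W), ((s t).val : R) * 2 ^ t) *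
      ∑ t ∈ range (4 * W), (-1) ^ (s t).val * 2 ^ ((4 * W - t) % (4 * W)) =
        -2 ^ (2 * k + 1) := by
  have hinv : (2 : R) ^ 2 ^ k * 2 = 1 := by rw [← pow_succ, h2]
  have hinv_pow : ((2 : R) ^ 2 ^ k) ^ (2 ^ k + 1) = 1 := by
    rw [← pow_mul, mul_comm, pow_mul, h2, one_pow]
  have h2N : (2 : R) ^ (4 * W) = 1 := by
    rw [hW, show 4 * ((2 ^ k - 1) * (2 ^ k + 1)) = (2 ^ k + 1) * (4 * (2 ^ k - 1)) by ring,
      pow_mul, h2, one_pow]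
  have hS := sum_range_yuGong_mul_pow hk hW hcount hs (fun z => (z.val : R)) h2
    (geom_sum_eq_zero_of_pow_eq_one h2 (by norm_num))
  have hT := sum_range_yuGong_mul_pow hk hW hcount hs (fun z => ((-1) ^ z.val : R)) hinv_pow
    (geom_sum_eq_zero_of_pow_eq_one hinv_pow (.of_mul_eq_one (-2) (by linear_combination -hinv)))
  have reflect : ∀ t ∈ range (4 * W), (2 : R) ^ ((4 * W - t) % (4 * W)) = (2 ^ 2 ^ k) ^ t :=
    fun t ht => pow_sub_mod_eq_pow hinv h2N (mem_range.mp ht).le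
  rw [hS, sum_congr rfl fun t ht => by rw [reflect t ht], hT]
  simp only [ZMod.val_zero, ZMod.val_one]
  ring

end YuGong

theorem stmt15_general
    (k : ℕ) (hk : 1 < k)
    (W N : ℕ) (hW : W = 2 ^ (2 * k) - 1) (hN : N = 4 * W)
    (F : Type) [Field F] [Fintype F] [Algebra (ZMod 2) F]
    (hF : Fintype.card F = 2 ^ (2 * k))
    (α : F) (hα : orderOf α = 2 ^ (2 * k) - 1)
    (b : ℕ → ZMod 2) (hb : ∀ j, b j = Algebra.trace (ZMod 2) F (α ^ j))
    (e : ℕ → ℤ)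
    (s : ℕ → ZMod 2)
    (hs : ∀ i j : ℕ, i ≤ 3 → j ≤ W - 1 →
      s (i * W + j) = (if ((i : ℤ) + e j) % 4 = 0 then 0 else 1) + b j)
    (S2 T2 : ℤ)
    (hS2 : S2 = ∑ t ∈ Finset.range N, ((s t).val : ℤ) * 2 ^ t)
    (hT2 : T2 = ∑ t ∈ Finset.range N, (-1 : ℤ) ^ (s t).val * 2 ^ ((N - t) % N))
    :
    Int.ModEq (2 ^ (2 ^ k + 1) - 1) (S2 * T2) (-(2 ^ (2 * k + 1))) := by
  have hk0 : 0 < k := by omega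
  have hcount : ∀ u < 2 ^ k + 1, ∑ l ∈ range (2 ^ k - 1), (b (l * (2 ^ k + 1) + u)).val =
      if u = 0 then 0 else 2 ^ (k - 1) := fun u hu => by
    simp_rw [hb]
    exact sum_range_val_trace_pow_mul_add hk0 hF hα hu
  have hm : ((2 ^ (2 ^ k + 1) - 1 : ℕ) : ℤ) = 2 ^ (2 ^ k + 1) - 1 := by
    push_cast [Nat.one_le_two_pow]
    ring
  rw [← hm, ← ZMod.intCast_eq_intCast_iff, hS2, hT2, hN]
  push_cast
  exact sum_range_yuGong_mul_sum_range_reflected hk0 (hW.trans (two_pow_two_mul_sub_one k)) hcount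
    hs (ZMod.two_pow_eq_one _)

theorem stmt15
    (k : ℕ) (hk : 1 < k)
    (δ : ℤ) (hδ : δ = 1 ∨ δ = -1)
    (W N : ℕ) (hW : W = 2 ^ (2 * k) - 1) (hN : N = 4 * W)
    (F : Type) [Field F] [Fintype F] [Algebra (ZMod 2) F]
    (hF : Fintype.card F = 2 ^ (2 * k))
    (α : F) (hα : orderOf α = 2 ^ (2 * k) - 1)
    (b : ℕ → ZMod 2) (hb : ∀ j, b j = Algebra.trace (ZMod 2) F (α ^ j))
    (e : ℕ → ℤ)
    (he : ∀ i r : ℕ, i ≤ 2 ^ k - 2 → r ≤ 2 ^ k →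
      e ((2 ^ k + 1) * i + r) =
        if r = 0 then (3 * (i : ℤ) + δ) % 4 else (3 * ((i : ℤ) + (r : ℤ))) % 4)
    (s : ℕ → ZMod 2)
    (hs : ∀ i j : ℕ, i ≤ 3 → j ≤ W - 1 →
      s (i * W + j) = (if ((i : ℤ) + e j) % 4 = 0 then 0 else 1) + b j)
    (S2 T2 : ℤ)
    (hS2 : S2 = ∑ t ∈ Finset.range N, ((s t).val : ℤ) * 2 ^ t)
    (hT2 : T2 = ∑ t ∈ Finset.range N, (-1 : ℤ) ^ (s t).val * 2 ^ ((N - t) % N))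
    :
    Int.ModEq (2 ^ (2 ^ k + 1) - 1) (S2 * T2) (-(2 ^ (2 * k + 1))) :=
  stmt15_general k hk W N hW hN F hF α hα b hb e s hs S2 T2 hS2 hT2
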